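/- arXiv:2503.18700 — 4 statements merged into one kernel-verified Lean document; each statement's English description precedes it below -/
import Mathlib

section
/- There is no embedding of the grid graph □_n into the knight graph K_n for any n ≥ 2; that is, for n ≥ 2 there is no injective map f : [n]×[n] → [n]×[n] such that whenever two points of [n]×[n] are at Euclidean distance 1, their images differ by a knight move (|Δx|,|Δy|) = (1,2) or (2,1). -/
/-- Two points of `ℤ²` are adjacent in the grid graph iff they are at Euclidean distance 1. -/
def gridAdj (a b : ℤ × ℤ) : Prop := |a.1 - b.1| + |a.2 - b.2| = 1

/-- Two points are joined by a `(p,q)`-leaper move iff the absolute values of their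
coordinate differences are `p` and `q` in some order. -/
def leapAdj (p q : ℤ) (a b : ℤ × ℤ) : Prop :=
  (|a.1 - b.1| = p ∧ |a.2 - b.2| = q) ∨ (|a.1 - b.1| = q ∧ |a.2 - b.2| = p)

/-- The board `[n] × [n]` as a subset of `ℤ²`. -/
def box (n : ℕ) : Set (ℤ × ℤ) := {v | 1 ≤ v.1 ∧ v.1 ≤ (n : ℤ) ∧ 1 ≤ v.2 ∧ v.2 ≤ (n : ℤ)}

/-!
An injective self-map of the finite board is a bijection, and a square with `d` grid neighbours
can only go to a square with at least `d` knight moves inside the board. A corner of the board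
has at most two knight moves, so the preimages of the four corners are the four grid corners.
The squares `(1, 2)` and `(2, 1)` have exactly the knight neighbours `(2, 4), (3, 1), (3, 3)` and
`(4, 2), (1, 3), (3, 3)`, so their preimages `b₁, b₂` are non-corner squares whose three grid
neighbours fill these sets; hence `b₁` and `b₂` have a common grid neighbour `z ↦ (3, 3)`.
If `b₁, z, b₂` turn a corner, the fourth vertex of their unit square would be a second common
knight neighbour of `(1, 2)` and `(2, 1)`; if they are collinear, the parallel row `s₁ t s₂`
beside them would need a knight path `f s₁ → f t → f s₂` through a neighbour of `(3, 3)`, and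
there is none. On the `2 × 2` board there are no knight moves at all.
-/

open Finset

instance : DecidableRel gridAdj := fun _ _ => inferInstanceAs (Decidable (_ = _))

instance (p q : ℤ) : DecidableRel (leapAdj p q) := fun _ _ => inferInstanceAs (Decidable (_ ∨ _))

lemma mem_box {n : ℕ} {v : ℤ × ℤ} :
    v ∈ box n ↔ 1 ≤ v.1 ∧ v.1 ≤ (n : ℤ) ∧ 1 ≤ v.2 ∧ v.2 ≤ (n : ℤ) := Iff.rfl

lemma gridAdj_iff {a b : ℤ × ℤ} :
    gridAdj a b ↔ (a.1 = b.1 ∧ (a.2 = b.2 + 1 ∨ b.2 = a.2 + 1)) ∨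
      (a.2 = b.2 ∧ (a.1 = b.1 + 1 ∨ b.1 = a.1 + 1)) := by
  unfold gridAdj
  grind

lemma leapAdj_one_two_iff {a b : ℤ × ℤ} :
    leapAdj 1 2 a b ↔ ((a.1 = b.1 + 1 ∨ b.1 = a.1 + 1) ∧ (a.2 = b.2 + 2 ∨ b.2 = a.2 + 2)) ∨
      ((a.1 = b.1 + 2 ∨ b.1 = a.1 + 2) ∧ (a.2 = b.2 + 1 ∨ b.2 = a.2 + 1)) := by
  unfold leapAdj
  grind

noncomputable def boxFinset (n : ℕ) : Finset (ℤ × ℤ) := Icc 1 (n : ℤ) ×ˢ Icc 1 (n : ℤ)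

lemma coe_boxFinset (n : ℕ) : (boxFinset n : Set (ℤ × ℤ)) = box n := by
  ext v
  simp only [boxFinset, coe_product, coe_Icc, Set.mem_prod, Set.mem_Icc, mem_box, and_assoc]

noncomputable def gridNbrs (n : ℕ) (v : ℤ × ℤ) : Finset (ℤ × ℤ) := (boxFinset n).filter (gridAdj v)

noncomputable def leapNbrs (p q : ℤ) (n : ℕ) (c : ℤ × ℤ) : Finset (ℤ × ℤ) :=
  (boxFinset n).filter (leapAdj p q c)

def corners (n : ℕ) : Finset (ℤ × ℤ) := {1, (n : ℤ)} ×ˢ {1, (n : ℤ)}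

section

variable {p q : ℤ} {n : ℕ} {a b c v w : ℤ × ℤ}

lemma mem_gridNbrs : w ∈ gridNbrs n v ↔ w ∈ box n ∧ gridAdj v w := by
  rw [gridNbrs, mem_filter, ← mem_coe, coe_boxFinset]

lemma mem_leapNbrs : w ∈ leapNbrs p q n c ↔ w ∈ box n ∧ leapAdj p q c w := by
  rw [leapNbrs, mem_filter, ← mem_coe, coe_boxFinset]

lemma mem_corners : v ∈ corners n ↔ (v.1 = 1 ∨ v.1 = n) ∧ (v.2 = 1 ∨ v.2 = n) := by
  simp [corners]

lemma mem_box_of_mem_corners (hn : 1 ≤ n) (hv : v ∈ corners n) : v ∈ box n := by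
  rw [mem_corners] at hv
  rw [mem_box]
  omega

lemma exists_unit_step_mem_Icc (hn : 2 ≤ n) {x : ℤ} (hx₁ : 1 ≤ x) (hxn : x ≤ n) :
    ∃ σ : ℤ, (σ = 1 ∨ σ = -1) ∧ 1 ≤ x + σ ∧ x + σ ≤ n := by
  by_cases h : x < n
  · exact ⟨1, by omega⟩
  · exact ⟨-1, by omega⟩

lemma three_le_card_gridNbrs (hn : 2 ≤ n) (hv : v ∈ box n) (hvc : v ∉ corners n) :
    3 ≤ #(gridNbrs n v) := by
  rw [mem_box] at hv
  rw [mem_corners] at hvc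
  obtain ⟨σ, hσ, hσ₁, hσn⟩ := exists_unit_step_mem_Icc hn hv.2.2.1 hv.2.2.2
  obtain ⟨τ, hτ, hτ₁, hτn⟩ := exists_unit_step_mem_Icc hn hv.1 hv.2.1
  apply two_lt_card.2
  by_cases h : 1 < v.1 ∧ v.1 < n
  · refine ⟨(v.1 - 1, v.2), ?_, (v.1 + 1, v.2), ?_, (v.1, v.2 + σ), ?_, ?_⟩ <;>
      grind [mem_gridNbrs, mem_box, gridAdj_iff]
  · refine ⟨(v.1, v.2 - 1), ?_, (v.1, v.2 + 1), ?_, (v.1 + τ, v.2), ?_, ?_⟩ <;>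
      grind [mem_gridNbrs, mem_box, gridAdj_iff]

lemma card_leapNbrs_le_two (hc : c ∈ corners n) : #(leapNbrs p q n c) ≤ 2 := by
  rw [mem_corners] at hc
  -- from a corner, every leap inside the board points inwards in both coordinates
  let φ₁ : ℤ → ℤ := fun k => if c.1 = 1 then 1 + k else n - k
  let φ₂ : ℤ → ℤ := fun k => if c.2 = 1 then 1 + k else n - k
  refine (card_le_card (t := {(φ₁ p, φ₂ q), (φ₁ q, φ₂ p)}) fun r hr => ?_).trans card_le_two
  rw [mem_leapNbrs, mem_box, leapAdj] at hr
  simp only [mem_insert, mem_singleton, Prod.ext_iff, φ₁, φ₂]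
  split_ifs <;> grind

lemma exists_square_or_ladder {b₁ b₂ z : ℤ × ℤ} (hn : 2 ≤ n) (hb₁ : b₁ ∈ box n)
    (hb₂ : b₂ ∈ box n) (hz : z ∈ box n) (hne : b₁ ≠ b₂) (h₁ : gridAdj b₁ z) (h₂ : gridAdj b₂ z) :
    (∃ w ∈ box n, w ≠ z ∧ gridAdj b₁ w ∧ gridAdj b₂ w) ∨
    (∃ s₁ ∈ box n, ∃ t ∈ box n, ∃ s₂ ∈ box n, s₁ ≠ z ∧ s₂ ≠ z ∧
      gridAdj b₁ s₁ ∧ gridAdj b₂ s₂ ∧ gridAdj z t ∧ gridAdj s₁ t ∧ gridAdj s₂ t) := by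
  rw [mem_box] at hb₁ hb₂ hz
  rw [gridAdj_iff] at h₁ h₂
  by_cases hsq : b₁.1 + b₂.1 ≠ 2 * z.1 ∨ b₁.2 + b₂.2 ≠ 2 * z.2
  · left
    refine ⟨(b₁.1 + b₂.1 - z.1, b₁.2 + b₂.2 - z.2), ?_, ?_⟩ <;> grind [mem_box, gridAdj_iff]
  right
  by_cases hhor : b₁.2 = z.2
  · obtain ⟨σ, hσ, hσ₁, hσn⟩ := exists_unit_step_mem_Icc hn hz.2.2.1 hz.2.2.2
    refine ⟨(b₁.1, b₁.2 + σ), ?_, (z.1, z.2 + σ), ?_, (b₂.1, b₂.2 + σ), ?_, ?_⟩ <;>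
      grind [mem_box, gridAdj_iff]
  · obtain ⟨σ, hσ, hσ₁, hσn⟩ := exists_unit_step_mem_Icc hn hz.1 hz.2.1
    refine ⟨(b₁.1 + σ, b₁.2), ?_, (z.1 + σ, z.2), ?_, (b₂.1 + σ, b₂.2), ?_, ?_⟩ <;>
      grind [mem_box, gridAdj_iff]

lemma leapNbrs_knight_one_two_subset : leapNbrs 1 2 n (1, 2) ⊆ {(2, 4), (3, 1), (3, 3)} := by
  intro r hr
  rw [mem_leapNbrs, mem_box, leapAdj_one_two_iff] at hr
  simp only [mem_insert, mem_singleton, Prod.ext_iff]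
  omega

lemma leapNbrs_knight_two_one_subset : leapNbrs 1 2 n (2, 1) ⊆ {(4, 2), (1, 3), (3, 3)} := by
  intro r hr
  rw [mem_leapNbrs, mem_box, leapAdj_one_two_iff] at hr
  simp only [mem_insert, mem_singleton, Prod.ext_iff]
  omega

lemma eq_three_three_of_mem_leapNbrs_knight (h₁ : w ∈ leapNbrs 1 2 n (1, 2))
    (h₂ : w ∈ leapNbrs 1 2 n (2, 1)) : w = (3, 3) := by
  have h₁' := leapNbrs_knight_one_two_subset h₁
  have h₂' := leapNbrs_knight_two_one_subset h₂
  simp only [mem_insert, mem_singleton] at h₁' h₂'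
  grind

lemma no_knight_ladder (ha : a ∈ leapNbrs 1 2 n (1, 2)) (hb : b ∈ leapNbrs 1 2 n (2, 1))
    (hc : c ∈ leapNbrs 1 2 n (3, 3)) (hac : c ∈ leapNbrs 1 2 n a) (hbc : c ∈ leapNbrs 1 2 n b)
    (ha₃ : a ≠ (3, 3)) (hb₃ : b ≠ (3, 3)) : False := by
  have ha' := leapNbrs_knight_one_two_subset ha
  have hb' := leapNbrs_knight_two_one_subset hb
  simp only [mem_insert, mem_singleton] at ha' hb'
  rw [mem_leapNbrs, mem_box, leapAdj_one_two_iff] at hc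
  rw [mem_leapNbrs, leapAdj_one_two_iff] at hac hbc
  rcases ha' with rfl | rfl | rfl <;> rcases hb' with rfl | rfl | rfl <;> grind

end

structure IsLeaperEmbedding (p q : ℤ) (n : ℕ) (f : ℤ × ℤ → ℤ × ℤ) : Prop where
  mapsTo : Set.MapsTo f (box n) (box n)
  injOn : Set.InjOn f (box n)
  adj : ∀ a ∈ box n, ∀ b ∈ box n, gridAdj a b → leapAdj p q (f a) (f b)

lemma not_isLeaperEmbedding_knight_two {f : ℤ × ℤ → ℤ × ℤ} : ¬ IsLeaperEmbedding 1 2 2 f := by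
  intro hf
  have h₁₁ : ((1, 1) : ℤ × ℤ) ∈ box 2 := by rw [mem_box]; omega
  have h₁₂ : ((1, 2) : ℤ × ℤ) ∈ box 2 := by rw [mem_box]; omega
  have hadj := hf.adj _ h₁₁ _ h₁₂ (by rw [gridAdj_iff]; omega)
  have h₁ := hf.mapsTo h₁₁
  have h₂ := hf.mapsTo h₁₂
  rw [mem_box] at h₁ h₂
  rw [leapAdj_one_two_iff] at hadj
  omega

namespace IsLeaperEmbedding

variable {p q : ℤ} {n : ℕ} {f : ℤ × ℤ → ℤ × ℤ} {a b b₁ b₂ u v z : ℤ × ℤ}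

lemma surjOn (hf : IsLeaperEmbedding p q n f) : Set.SurjOn f (box n) (box n) :=
  (((coe_boxFinset n ▸ (boxFinset n).finite_toSet).injOn_iff_bijOn_of_mapsTo hf.mapsTo).1
    hf.injOn).surjOn

lemma apply_mem_leapNbrs (hf : IsLeaperEmbedding p q n f) (ha : a ∈ box n) (hb : b ∈ box n)
    (hab : gridAdj a b) : f b ∈ leapNbrs p q n (f a) :=
  mem_leapNbrs.2 ⟨hf.mapsTo hb, hf.adj a ha b hb hab⟩

lemma image_gridNbrs_subset (hf : IsLeaperEmbedding p q n f) (hv : v ∈ box n) :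
    (gridNbrs n v).image f ⊆ leapNbrs p q n (f v) := by
  simp only [image_subset_iff, mem_gridNbrs]
  exact fun w ⟨hw, hvw⟩ => hf.apply_mem_leapNbrs hv hw hvw

lemma card_image_gridNbrs (hf : IsLeaperEmbedding p q n f) :
    #((gridNbrs n v).image f) = #(gridNbrs n v) :=
  card_image_of_injOn (hf.injOn.mono fun _ hw => (mem_gridNbrs.1 hw).1)

lemma card_gridNbrs_le (hf : IsLeaperEmbedding p q n f) (hv : v ∈ box n) :
    #(gridNbrs n v) ≤ #(leapNbrs p q n (f v)) :=
  hf.card_image_gridNbrs ▸ card_le_card (hf.image_gridNbrs_subset hv)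

lemma image_gridNbrs_eq (hf : IsLeaperEmbedding p q n f) (hv : v ∈ box n)
    {S : Finset (ℤ × ℤ)} (hS : leapNbrs p q n (f v) ⊆ S) (hcard : #S ≤ #(gridNbrs n v)) :
    (gridNbrs n v).image f = S :=
  eq_of_subset_of_card_le ((hf.image_gridNbrs_subset hv).trans hS)
    (hf.card_image_gridNbrs ▸ hcard)

lemma mem_corners_of_apply_mem_corners (hf : IsLeaperEmbedding p q n f) (hn : 2 ≤ n)
    (hu : u ∈ box n) (hfu : f u ∈ corners n) : u ∈ corners n := by
  by_contra hu'
  have := (three_le_card_gridNbrs hn hu hu').trans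
    ((hf.card_gridNbrs_le hu).trans (card_leapNbrs_le_two hfu))
  omega

lemma apply_mem_corners (hf : IsLeaperEmbedding p q n f) (hn : 2 ≤ n) (hu : u ∈ corners n) :
    f u ∈ corners n := by
  have hsub : corners n ⊆ (corners n).image f := fun c hc => by
    obtain ⟨v, hv, rfl⟩ := hf.surjOn (mem_box_of_mem_corners (by omega) hc)
    exact mem_image_of_mem f (hf.mem_corners_of_apply_mem_corners hn hv hc)
  rw [eq_of_subset_of_card_le hsub card_image_le]
  exact mem_image_of_mem f hu

lemma exists_gridAdj_apply_eq_three_three (hf : IsLeaperEmbedding 1 2 n f) (hn : 3 ≤ n)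
    (hb : b ∈ box n) (hfb : f b = (1, 2) ∨ f b = (2, 1)) :
    ∃ z ∈ box n, gridAdj b z ∧ f z = (3, 3) := by
  have hbc : b ∉ corners n := fun h => by
    have := hf.apply_mem_corners (by omega) h
    rw [mem_corners] at this
    rcases hfb with hfb | hfb <;> rw [hfb] at this <;> omega
  obtain ⟨S, hS, hS₃, h₃₃⟩ :
      ∃ S : Finset (ℤ × ℤ), leapNbrs 1 2 n (f b) ⊆ S ∧ #S ≤ 3 ∧ (3, 3) ∈ S := by
    rcases hfb with hfb | hfb <;> rw [hfb]
    · exact ⟨_, leapNbrs_knight_one_two_subset, card_le_three, by simp⟩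
    · exact ⟨_, leapNbrs_knight_two_one_subset, card_le_three, by simp⟩
  rw [← hf.image_gridNbrs_eq hb hS (hS₃.trans (three_le_card_gridNbrs (by omega) hb hbc))] at h₃₃
  obtain ⟨z, hz, hfz⟩ := mem_image.1 h₃₃
  exact ⟨z, (mem_gridNbrs.1 hz).1, (mem_gridNbrs.1 hz).2, hfz⟩

lemma apply_ne_three_three (hf : IsLeaperEmbedding 1 2 n f) (hn : 2 ≤ n) (hb₁ : b₁ ∈ box n)
    (hb₂ : b₂ ∈ box n) (hz : z ∈ box n) (h₁ : gridAdj b₁ z) (h₂ : gridAdj b₂ z)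
    (hfb₁ : f b₁ = (1, 2)) (hfb₂ : f b₂ = (2, 1)) : f z ≠ (3, 3) := by
  intro hfz
  have hne : b₁ ≠ b₂ := by
    rintro rfl
    simp [hfb₁] at hfb₂
  rcases exists_square_or_ladder hn hb₁ hb₂ hz hne h₁ h₂ with
    ⟨w, hw, hwz, hb₁w, hb₂w⟩ | ⟨s₁, hs₁, t, ht, s₂, hs₂, hs₁z, hs₂z, hb₁s, hb₂s, hzt, hs₁t, hs₂t⟩
  · have hfw := eq_three_three_of_mem_leapNbrs_knight (hfb₁ ▸ hf.apply_mem_leapNbrs hb₁ hw hb₁w)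
      (hfb₂ ▸ hf.apply_mem_leapNbrs hb₂ hw hb₂w)
    exact hwz (hf.injOn hw hz (hfw.trans hfz.symm))
  · refine no_knight_ladder (hfb₁ ▸ hf.apply_mem_leapNbrs hb₁ hs₁ hb₁s)
      (hfb₂ ▸ hf.apply_mem_leapNbrs hb₂ hs₂ hb₂s) (hfz ▸ hf.apply_mem_leapNbrs hz ht hzt)
      (hf.apply_mem_leapNbrs hs₁ ht hs₁t) (hf.apply_mem_leapNbrs hs₂ ht hs₂t) ?_ ?_
    · exact hfz ▸ hf.injOn.ne hs₁ hz hs₁z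
    · exact hfz ▸ hf.injOn.ne hs₂ hz hs₂z

end IsLeaperEmbedding

/-- There is no embedding of the grid graph `□_n` into the knight graph `K_n` for `n ≥ 2`. -/
theorem no_perfect_knight_embedding (n : ℕ) (hn : 2 ≤ n) :
    ¬ ∃ f : ℤ × ℤ → ℤ × ℤ,
        (∀ v ∈ box n, f v ∈ box n) ∧
        Set.InjOn f (box n) ∧
        (∀ a ∈ box n, ∀ b ∈ box n, gridAdj a b → leapAdj 1 2 (f a) (f b)) := by
  rintro ⟨f, hbox, hinj, hadj⟩
  have hf : IsLeaperEmbedding 1 2 n f := ⟨hbox, hinj, hadj⟩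
  obtain rfl | hn₃ := hn.eq_or_lt
  · exact not_isLeaperEmbedding_knight_two hf
  obtain ⟨b₁, hb₁, hfb₁⟩ := hf.surjOn (show ((1, 2) : ℤ × ℤ) ∈ box n by rw [mem_box]; omega)
  obtain ⟨b₂, hb₂, hfb₂⟩ := hf.surjOn (show ((2, 1) : ℤ × ℤ) ∈ box n by rw [mem_box]; omega)
  obtain ⟨z, hz, hb₁z, hfz⟩ := hf.exists_gridAdj_apply_eq_three_three hn₃ hb₁ (.inl hfb₁)
  obtain ⟨z', hz', hb₂z', hfz'⟩ := hf.exists_gridAdj_apply_eq_three_three hn₃ hb₂ (.inr hfb₂)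
  obtain rfl : z' = z := hf.injOn hz' hz (hfz'.trans hfz.symm)
  exact hf.apply_ne_three_three hn hb₁ hb₂ hz hb₁z hb₂z' hfb₁ hfb₂ hfz
end

section
/- Every 4-cycle in the infinite (p,q)-leaper graph on ℤ² is geometrically a rhombus: if A, B, C, D are distinct points of ℤ² with A–B, B–C, C–D, D–A all leaper moves (pairs of points whose coordinate differences have absolute values {p,q}), then A + C = B + D (hence also all four sides have the same Euclidean length). -/
set_option maxHeartbeats 8000000 in
private lemma leaper_key (p q a1 a2 a3 a4 b1 b2 b3 b4 : ℤ) (hp : 0 < p) (hq : 0 < q)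
    (h1 : (|a1| = p ∧ |b1| = q) ∨ (|a1| = q ∧ |b1| = p))
    (h2 : (|a2| = p ∧ |b2| = q) ∨ (|a2| = q ∧ |b2| = p))
    (h3 : (|a3| = p ∧ |b3| = q) ∨ (|a3| = q ∧ |b3| = p))
    (h4 : (|a4| = p ∧ |b4| = q) ∨ (|a4| = q ∧ |b4| = p))
    (hsa : a1 + a2 + a3 + a4 = 0) (hsb : b1 + b2 + b3 + b4 = 0)
    (hAC : ¬(a1 + a2 = 0 ∧ b1 + b2 = 0)) (hBD : ¬(a2 + a3 = 0 ∧ b2 + b3 = 0)) :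
    a1 + a3 = 0 ∧ b1 + b3 = 0 := by
  simp only [abs_eq hp.le, abs_eq hq.le] at *
  rcases h1 with ⟨x1, y1⟩ | ⟨x1, y1⟩ <;> rcases h2 with ⟨x2, y2⟩ | ⟨x2, y2⟩ <;>
    rcases h3 with ⟨x3, y3⟩ | ⟨x3, y3⟩ <;> rcases h4 with ⟨x4, y4⟩ | ⟨x4, y4⟩ <;> omega

/-- Every 4-cycle in the infinite `(p,q)`-leaper graph on `ℤ²` is geometrically a rhombus:
if the distinct points `A, B, C, D` form a cycle of leaper moves, then `A + C = B + D`. -/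
theorem leaper_four_cycle_rhombus (p q : ℤ) (hp : 0 < p) (hq : 0 < q) (hpq : p ≠ q)
    (A B C D : ℤ × ℤ)
    (hdist : A ≠ B ∧ A ≠ C ∧ A ≠ D ∧ B ≠ C ∧ B ≠ D ∧ C ≠ D)
    (hAB : leapAdj p q A B) (hBC : leapAdj p q B C)
    (hCD : leapAdj p q C D) (hDA : leapAdj p q D A) :
    A + C = B + D := by
  obtain ⟨-, hAC, -, -, hBD, -⟩ := hdist
  have key := leaper_key p q (A.1 - B.1) (B.1 - C.1) (C.1 - D.1) (D.1 - A.1)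
    (A.2 - B.2) (B.2 - C.2) (C.2 - D.2) (D.2 - A.2) hp hq hAB hBC hCD hDA
    (by ring) (by ring)
    (fun h => hAC (Prod.ext (by linarith [h.1]) (by linarith [h.2])))
    (fun h => hBD (Prod.ext (by linarith [h.1]) (by linarith [h.2])))
  exact Prod.ext (by have := key.1; simp [Prod.fst_add]; linarith)
    (by have := key.2; simp [Prod.snd_add]; linarith)
end

section
/- Let p, q be odd positive integers with p ≠ q and gcd(p,q) = 1. Set u₁ = (p,q), u₂ = (−q,p) and v₁ = (q,p), v₂ = (−p,q), and let A = ℤu₁ + ℤu₂, B = ℤv₁ + ℤv₂. Then A ∩ B = ℤ·(h,h) + ℤ·(−h,h) where h = (p² + q²)/2. -/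
/-- The lattice (subgroup of `ℤ²`) generated by the vectors `u` and `v`, as a point set. -/
def latticeSet (u v : ℤ × ℤ) : Set (ℤ × ℤ) := {w | ∃ a b : ℤ, w = a • u + b • v}

/-- For odd coprime `p ≠ q`, the lattices `A = ℤ(p,q) + ℤ(−q,p)` and
`B = ℤ(q,p) + ℤ(−p,q)` satisfy `A ∩ B = ℤ(h,h) + ℤ(−h,h)` with `h = (p² + q²)/2`. -/
theorem lattice_intersection_same_length (p q : ℤ)
    (hp : 0 < p) (hq : 0 < q) (hop : Odd p) (hoq : Odd q) (hpq : p ≠ q)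
    (hg : Int.gcd p q = 1) :
    latticeSet (p, q) (-q, p) ∩ latticeSet (q, p) (-p, q) =
      latticeSet ((p ^ 2 + q ^ 2) / 2, (p ^ 2 + q ^ 2) / 2)
        (-((p ^ 2 + q ^ 2) / 2), (p ^ 2 + q ^ 2) / 2) := by
  obtain ⟨m, hm⟩ := hop
  obtain ⟨n, hn⟩ := hoq
  subst hm hn
  have hH : ((2*m+1) ^ 2 + (2*n+1) ^ 2) / 2 = (m+n+1)^2 + (m-n)^2 := by
    rw [show ((2*m+1) ^ 2 + (2*n+1) ^ 2 : ℤ) = 2*((m+n+1)^2 + (m-n)^2) by ring,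
      Int.mul_ediv_cancel_left _ two_ne_zero]
  rw [hH]
  obtain ⟨s, t, hst⟩ : ∃ s t : ℤ, s * (2*m+1) + t * (2*n+1) = 1 := by
    obtain ⟨s, t, hst⟩ := Int.isCoprime_iff_gcd_eq_one.mpr hg
    exact ⟨s, t, hst⟩
  have hHne : ((m+n+1)^2 + (m-n)^2 : ℤ) ≠ 0 := by
    intro h0
    have h1 := sq_nonneg (m+n+1)
    have h2 := sq_nonneg (m-n)
    have h3 : ((m+n+1)^2 : ℤ) = 0 := by linarith
    have h4 : ((m-n)^2 : ℤ) = 0 := by linarith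
    have h5 : (m+n+1 : ℤ) = 0 := pow_eq_zero_iff two_ne_zero |>.mp h3
    have h6 : (m-n : ℤ) = 0 := pow_eq_zero_iff two_ne_zero |>.mp h4
    omega
  ext ⟨x, y⟩
  simp only [latticeSet, Set.mem_inter_iff, Set.mem_setOf_eq, Prod.smul_mk, smul_eq_mul,
    Prod.mk_add_mk, Prod.mk.injEq]
  constructor
  · rintro ⟨⟨a, b, hx1, hy1⟩, ⟨c, d, hx2, hy2⟩⟩
    set H : ℤ := (m+n+1)^2 + (m-n)^2 with hHdef
    set p : ℤ := 2*m+1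
    set q : ℤ := 2*n+1
    have hpq2 : p^2 + q^2 = 2*H := by rw [hHdef]; ring
    have e1 : x*p + y*q = a*(p^2+q^2) := by linear_combination p*hx1 + q*hy1
    have e2 : y*p - x*q = b*(p^2+q^2) := by linear_combination p*hy1 - q*hx1
    have e3 : x*q + y*p = c*(p^2+q^2) := by linear_combination q*hx2 + p*hy2
    have e4 : y*q - x*p = d*(p^2+q^2) := by linear_combination q*hy2 - p*hx2
    set K : ℤ := s*(a-d) + t*(c-b) with hK
    set L : ℤ := s*(b+c) + t*(a+d) with hL
    have hxK : x = K*H := by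
      have h2x : (2:ℤ)*x = 2*(K*H) := by
        linear_combination s*e1 - s*e4 + t*e3 - t*e2 - (2*x)*hst + K*hpq2
      exact mul_left_cancel₀ two_ne_zero h2x
    have hyL : y = L*H := by
      have h2y : (2:ℤ)*y = 2*(L*H) := by
        linear_combination s*e2 + s*e3 + t*e1 + t*e4 - (2*y)*hst + L*hpq2
      exact mul_left_cancel₀ two_ne_zero h2y
    have hKL : K*p + L*q = 2*a := by
      have : H*(K*p + L*q) = H*(2*a) := by
        linear_combination e1 - p*hxK - q*hyL + a*hpq2
      exact mul_left_cancel₀ hHne this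
    refine ⟨a - K*m - L*n, L - a + K*m + L*n, ?_, ?_⟩
    · linear_combination hxK + H*hKL
    · linear_combination hyL
  · rintro ⟨e, f, hx, hy⟩
    refine ⟨⟨e*(m+n+1) - f*(m-n), e*(m-n) + f*(m+n+1), by linear_combination hx,
        by linear_combination hy⟩,
      ⟨e*(m+n+1) + f*(m-n), f*(m+n+1) - e*(m-n), by linear_combination hx,
        by linear_combination hy⟩⟩
end

section
/- Let p be odd and q even with gcd(p,q) = 1, p,q ≥ 1. Consider the path α in ℤ² starting at the origin whose 4kp steps are given by k repetitions of the sequence: (p,q),(−p,q) repeated (p−1) times, then (p,q),(p,q), then (p,−q),(−p,−q) repeated (p−1) times, then (p,−q),(p,−q). Then every difference between two vertices of α has the form (p·x, q·y) with x + y even and |y| ≤ 2p, and moreover every such difference with |y| = 2p satisfies x ≡ 2 (mod 4). -/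
/-- The `i`-th step of the free-leaper construction path: the step sequence is periodic
with period `4p`, each period consisting of `(p,q),(−p,q)` repeated `p − 1` times, then
`(p,q),(p,q)`, then `(p,−q),(−p,−q)` repeated `p − 1` times, then `(p,−q),(p,−q)`. -/
def lstep (p q : ℕ) (i : ℕ) : ℤ × ℤ :=
  let r := i % (4 * p)
  if r < 2 * (p - 1) then
    (if r % 2 = 0 then ((p : ℤ), (q : ℤ)) else (-(p : ℤ), (q : ℤ)))
  else if r < 2 * p then ((p : ℤ), (q : ℤ))
  else if r < 4 * p - 2 then
    (if r % 2 = 0 then ((p : ℤ), -(q : ℤ)) else (-(p : ℤ), -(q : ℤ)))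
  else ((p : ℤ), -(q : ℤ))

/-- The `i`-th vertex of the path, starting at the origin. -/
def lvert (p q : ℕ) (i : ℕ) : ℤ × ℤ := ∑ j ∈ Finset.range i, lstep p q j

/-- `x`-coordinate (in units of `p`) of the vertex at position `r` within one period. -/
def aval (p r : ℕ) : ℤ :=
  if r ≤ 2 * (p - 1) then ((r % 2 : ℕ) : ℤ)
  else if r ≤ 2 * p then (r : ℤ) - 2 * ((p : ℤ) - 1)
  else if r ≤ 4 * p - 2 then 2 + ((r % 2 : ℕ) : ℤ)
  else (r : ℤ) - (4 * (p : ℤ) - 4)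

/-- `y`-coordinate (in units of `q`) of the vertex at position `r` within one period. -/
def bval (p r : ℕ) : ℤ := if r ≤ 2 * p then (r : ℤ) else 4 * (p : ℤ) - (r : ℤ)

def Aint (p i : ℕ) : ℤ := 4 * ((i / (4 * p) : ℕ) : ℤ) + aval p (i % (4 * p))
def Bint (p i : ℕ) : ℤ := bval p (i % (4 * p))

private lemma mul_pm (a D : ℤ) (h : D = 1) : a = a * D := by rw [h, mul_one]
private lemma mul_pm' (a D : ℤ) (h : D = -1) : -a = a * D := by rw [h]; ring

set_option maxHeartbeats 2000000 in
lemma step_eq (p q : ℕ) (hp1 : 0 < p) (i : ℕ) :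
    lstep p q i = ((p : ℤ) * (Aint p (i + 1) - Aint p i),
      (q : ℤ) * (Bint p (i + 1) - Bint p i)) := by
  have h4p : 0 < 4 * p := by omega
  set r := i % (4 * p) with hr_def
  set m := i / (4 * p) with hm_def
  have hr : r < 4 * p := Nat.mod_lt _ h4p
  have hi : i = 4 * p * m + r := by
    rw [hr_def, hm_def]; exact (Nat.div_add_mod i (4 * p)).symm
  by_cases hlast : r = 4 * p - 1
  · have hmod1 : (i + 1) % (4 * p) = 0 := by
      rw [show i + 1 = 4 * p * (m + 1) from by rw [Nat.mul_add, Nat.mul_one]; omega]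
      exact Nat.mul_mod_right _ _
    have hdiv1 : (i + 1) / (4 * p) = m + 1 := by
      rw [show i + 1 = 4 * p * (m + 1) from by rw [Nat.mul_add, Nat.mul_one]; omega]
      exact Nat.mul_div_cancel_left _ h4p
    simp only [lstep, Aint, Bint, aval, bval, hmod1, hdiv1, ← hr_def, ← hm_def]
    split_ifs <;>
      first
        | omega
        | (simp only [Prod.mk.injEq]; constructor <;>
            first
              | exact mul_pm _ _ (by push_cast; omega)
              | exact mul_pm' _ _ (by push_cast; omega))
  · have hmod1 : (i + 1) % (4 * p) = r + 1 := by
      rw [show i + 1 = 4 * p * m + (r + 1) from by omega, Nat.mul_add_mod,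
        Nat.mod_eq_of_lt (by omega)]
    have hdiv1 : (i + 1) / (4 * p) = m := by
      rw [show i + 1 = 4 * p * m + (r + 1) from by omega, Nat.mul_add_div h4p,
        Nat.div_eq_of_lt (by omega), Nat.add_zero]
    simp only [lstep, Aint, Bint, aval, bval, hmod1, hdiv1, ← hr_def, ← hm_def]
    split_ifs <;>
      first
        | omega
        | (simp only [Prod.mk.injEq]; constructor <;>
            first
              | exact mul_pm _ _ (by push_cast; omega)
              | exact mul_pm' _ _ (by push_cast; omega))

lemma vert_eq (p q : ℕ) (hp1 : 0 < p) (i : ℕ) :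
    lvert p q i = ((p : ℤ) * Aint p i, (q : ℤ) * Bint p i) := by
  induction i with
  | zero =>
      simp [lvert, Aint, Bint, aval, bval, Prod.ext_iff]
  | succ n ih =>
      rw [lvert, Finset.sum_range_succ, ← lvert, ih, step_eq p q hp1 n,
        Prod.mk_add_mk, Prod.mk.injEq]
      constructor <;> ring

lemma bval_bounds (p r : ℕ) (hr : r < 4 * p) : 0 ≤ bval p r ∧ bval p r ≤ 2 * p := by
  unfold bval; split_ifs <;> constructor <;> push_cast <;> omega

lemma parity_ab (p r : ℕ) (hp1 : 0 < p) (hr : r < 4 * p) :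
    (aval p r + bval p r) % 2 = 0 := by
  unfold aval bval; split_ifs <;> push_cast <;> omega

lemma bval_top (p r : ℕ) (hp1 : 0 < p) (hr : r < 4 * p) (h : bval p r = 2 * p) :
    aval p r = 2 := by
  have : r = 2 * p := by unfold bval at h; split_ifs at h <;> omega
  subst this
  unfold aval; split_ifs <;> push_cast <;> omega

lemma bval_bot (p r : ℕ) (hp1 : 0 < p) (hr : r < 4 * p) (h : bval p r = 0) :
    aval p r = 0 := by
  have : r = 0 := by unfold bval at h; split_ifs at h <;> omega
  subst this
  unfold aval; split_ifs <;> simp <;> omega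

/-- For `p` odd and `q` even, coprime, every difference between two vertices of the
`4kp`-step construction path has the form `(p·x, q·y)` with `x + y` even and `|y| ≤ 2p`;
moreover if `|y| = 2p` then `x ≡ 2 (mod 4)`. -/
theorem construction_path_differences (p q k : ℕ)
    (hp : Odd p) (hq : Even q) (hp1 : 0 < p) (hq1 : 0 < q)
    (hg : Nat.gcd p q = 1) (hk : 0 < k) :
    ∀ i j : ℕ, i ≤ 4 * k * p → j ≤ 4 * k * p →
      ∃ x y : ℤ, lvert p q i - lvert p q j = ((p : ℤ) * x, (q : ℤ) * y) ∧
        Even (x + y) ∧ |y| ≤ 2 * (p : ℤ) ∧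
        (|y| = 2 * (p : ℤ) → x ≡ 2 [ZMOD 4]) := by
  intro i j hi hj
  have h4p : 0 < 4 * p := by omega
  have hri : i % (4 * p) < 4 * p := Nat.mod_lt _ h4p
  have hrj : j % (4 * p) < 4 * p := Nat.mod_lt _ h4p
  refine ⟨Aint p i - Aint p j, Bint p i - Bint p j, ?_, ?_, ?_, ?_⟩
  · rw [vert_eq p q hp1, vert_eq p q hp1]
    simp [Prod.ext_iff]; constructor <;> ring
  · have h1 := parity_ab p _ hp1 hri
    have h2 := parity_ab p _ hp1 hrj
    rw [Int.even_iff]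
    unfold Aint Bint
    omega
  · have h1 := bval_bounds p _ hri
    have h2 := bval_bounds p _ hrj
    rw [abs_le]
    unfold Bint
    constructor <;> push_cast <;> omega
  · intro hy
    have h1 := bval_bounds p _ hri
    have h2 := bval_bounds p _ hrj
    have hcase : (Bint p i = 2 * p ∧ Bint p j = 0) ∨ (Bint p i = 0 ∧ Bint p j = 2 * p) := by
      rcases abs_eq (by positivity : (0:ℤ) ≤ 2 * (p:ℤ)) |>.mp hy with h | h <;>
        unfold Bint at h ⊢ <;> [left; right] <;> constructor <;> omega
    show (Aint p i - Aint p j) % 4 = 2 % 4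
    rcases hcase with ⟨ht, hb⟩ | ⟨hb, ht⟩
    · have e1 := bval_top p _ hp1 hri ht
      have e2 := bval_bot p _ hp1 hrj hb
      unfold Aint
      omega
    · have e1 := bval_bot p _ hp1 hri hb
      have e2 := bval_top p _ hp1 hrj ht
      unfold Aint
      omega
end
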